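/- Let M/K be a nontrivial finite extension obtained by strong general magnification from L/K through J/K, and suppose one of the fields in the unique descending chain of M/K different from both M and K coincides with one of the fields in the unique ascending chain of M/K. Then at least one of the following holds: (1) L/K is primitive; (2) the magnification is nontrivial and J/K is primitive; (3) the magnification is nontrivial, r_K(J) = 1, t_K(L) = 1, the unique ascending chain of J/K terminates at J, and the unique descending chain of L/K terminates at K; (4) the magnification is nontrivial, r_K(L) = 1, t_K(J) = 1, the unique ascending chain of L/K terminates at L, and the unique descending chain of J/K terminates at K. -/

import Mathlib

/-! Suppose `L = L₁F` is a nontrivial strong cluster magnification (`F/K` Galois,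
`L̃₁ ∩ F = K`). Then `M = (L₁J)F`, so `M/L₁J` and `F/K` are both Galois. A Galois pair `E ⊆ F`
means that `Gal(K̄/E)` normalizes `Gal(K̄/F)`; hence Galois pairs below `M` are stable under
meets of the lower field, and Galois extensions of `K` inside `M` under joins with `F`. So every
proper member of the descending chain of `M` lies in `L₁J`, and every nontrivial member of the
ascending chain contains `F`. A common member would give `F ⊆ L₁J`, whereas natural
irrationalities give `(L₁J)~ ∩ F ⊆ L̃₁ ∩ F = K`. Thus `L/K` is always primitive. -/

open IntermediateField Module

section Defs

variable (K Kbar : Type*) [Field K] [Field Kbar] [Algebra K Kbar]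

/-- The Galois closure inside the ambient field `Kbar` of an intermediate field `L` of
`Kbar / K`: the compositum of all the `K`-conjugates of `L` in `Kbar`. -/
noncomputable def galClosure (L : IntermediateField K Kbar) : IntermediateField K Kbar :=
  ⨆ f : ↥L →ₐ[K] Kbar, f.fieldRange

/-- The subgroup `H = Gal(L̃/L)` of `G = Gal(L̃/K)`. -/
noncomputable def fixSub (L : IntermediateField K Kbar) :
    Subgroup (↥(galClosure K Kbar L) ≃ₐ[K] ↥(galClosure K Kbar L)) :=
  (IntermediateField.comap (galClosure K Kbar L).val L).fixingSubgroup

/-- The cluster size `r_K(L) = [N_G(H) : H]`. -/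
noncomputable def clusterSize (L : IntermediateField K Kbar) : ℕ :=
  (fixSub K Kbar L).relIndex
    (Subgroup.normalizer (fixSub K Kbar L : Set (↥(galClosure K Kbar L) ≃ₐ[K] ↥(galClosure K Kbar L))))

/-- The number of clusters `s_K(L) = [G : N_G(H)]`. -/
noncomputable def numClusters (L : IntermediateField K Kbar) : ℕ :=
  (Subgroup.normalizer (fixSub K Kbar L :
      Set (↥(galClosure K Kbar L) ≃ₐ[K] ↥(galClosure K Kbar L)))).index

/-- The ascending index `t_K(L) = [G : H^G]`. -/
noncomputable def ascIndex (L : IntermediateField K Kbar) : ℕ :=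
  (Subgroup.normalClosure (fixSub K Kbar L :
      Set (↥(galClosure K Kbar L) ≃ₐ[K] ↥(galClosure K Kbar L)))).index

/-- The quantity `u_K(L) = [H^G : H]`. -/
noncomputable def uIndex (L : IntermediateField K Kbar) : ℕ :=
  (fixSub K Kbar L).relIndex (Subgroup.normalClosure (fixSub K Kbar L :
      Set (↥(galClosure K Kbar L) ≃ₐ[K] ↥(galClosure K Kbar L))))

/-- `M/K` is obtained by strong cluster magnification from `L/K` through `F/K`. -/
def IsSCMvia (M L F : IntermediateField K Kbar) : Prop :=
  L ≤ M ∧ 2 < Module.finrank K ↥L ∧ FiniteDimensional K ↥F ∧ IsGalois K ↥F ∧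
    galClosure K Kbar L ⊓ F = ⊥ ∧ L ⊔ F = M

/-- `M/K` is primitive: it is not obtained by a nontrivial strong cluster magnification
from any subextension over `K`. -/
def IsPrimitive (M : IntermediateField K Kbar) : Prop :=
  ¬ ∃ L F : IntermediateField K Kbar, IsSCMvia K Kbar M L F ∧ F ≠ ⊥

/-- `M/K` is obtained by strong general magnification from `L/K` through `J/K`. -/
def IsSGMvia (M L J : IntermediateField K Kbar) : Prop :=
  L ≤ M ∧ 1 < Module.finrank K ↥L ∧ FiniteDimensional K ↥J ∧
    galClosure K Kbar L ⊓ galClosure K Kbar J = ⊥ ∧ L ⊔ J = M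

/-- `M/K` is general primitive: not obtained by a nontrivial strong general magnification
from any subextension over `K`. -/
def IsGeneralPrimitive (M : IntermediateField K Kbar) : Prop :=
  ¬ ∃ L J : IntermediateField K Kbar, IsSGMvia K Kbar M L J ∧ J ≠ ⊥

/-- `F/E` is a Galois pair of intermediate fields: `E ≤ F` and `F/E` is Galois. -/
def IsGaloisPair (E F : IntermediateField K Kbar) : Prop :=
  ∃ h : E ≤ F, IsGalois ↥E ↥(IntermediateField.extendScalars h)

/-- One step of the unique descending chain: `N'` is an intermediate field of `N/K` such
that `N/N'` is Galois of maximal possible degree. -/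
def DescStep (N N' : IntermediateField K Kbar) : Prop :=
  N' ≤ N ∧ IsGaloisPair K Kbar N' N ∧
    ∀ N'' : IntermediateField K Kbar, N'' ≤ N → IsGaloisPair K Kbar N'' N →
      Module.finrank K ↥N' ≤ Module.finrank K ↥N''

/-- One step of the unique ascending chain for `L/K`: `F'` is an intermediate field of
`L/F` such that `F'/F` is Galois of maximal possible degree. -/
def AscStep (L F F' : IntermediateField K Kbar) : Prop :=
  F ≤ F' ∧ F' ≤ L ∧ IsGaloisPair K Kbar F F' ∧
    ∀ F'' : IntermediateField K Kbar, F ≤ F'' → F'' ≤ L → IsGaloisPair K Kbar F F'' →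
      Module.finrank K ↥F'' ≤ Module.finrank K ↥F'

/-- `E` occurs in the unique descending chain of `L/K`. -/
def InDescChain (L E : IntermediateField K Kbar) : Prop :=
  Relation.ReflTransGen (DescStep K Kbar) L E

/-- `E` occurs in the unique ascending chain of `L/K`. -/
def InAscChain (L E : IntermediateField K Kbar) : Prop :=
  Relation.ReflTransGen (AscStep K Kbar L) ⊥ E

end Defs

namespace IntermediateField

variable {K L : Type*} [Field K] [Field L] [Algebra K L]

theorem finiteDimensional_of_le {X Y : IntermediateField K L} [FiniteDimensional K Y]
    (h : X ≤ Y) : FiniteDimensional K X :=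
  .of_injective (inclusion h).toLinearMap (inclusion_injective h)

/-- `X` and `(X ⊔ Y) ⊓ W` are both linearly disjoint from `Y` and have the same compositum with it,
hence the same degree. -/
theorem sup_inf_eq_of_isGalois {X Y W : IntermediateField K L} [IsGalois K Y]
    [FiniteDimensional K Y] [FiniteDimensional K W] (hXW : X ≤ W) (hWY : W ⊓ Y = ⊥) :
    (X ⊔ Y) ⊓ W = X := by
  set T := (X ⊔ Y) ⊓ W
  have hXT : X ≤ T := le_inf le_sup_left hXW
  have : FiniteDimensional K X := finiteDimensional_of_le hXW
  have : FiniteDimensional K T := finiteDimensional_of_le inf_le_right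
  have hTY : Y ⊔ T = Y ⊔ X :=
    le_antisymm (sup_le le_sup_left (sup_comm X Y ▸ inf_le_left)) (sup_le_sup_left hXT Y)
  have finrank_sup_of_le_W {Z : IntermediateField K L} [FiniteDimensional K Z] (hZ : Z ≤ W) :
      finrank K ↥(Y ⊔ Z) = finrank K Y * finrank K Z :=
    (LinearDisjoint.of_inf_eq_bot (le_bot_iff.mp (hWY ▸ inf_comm Y Z ▸ inf_le_inf_right Y hZ))
      ).finrank_sup
  have hrank : finrank K Y * finrank K T = finrank K Y * finrank K X := by
    rw [← finrank_sup_of_le_W inf_le_right, ← finrank_sup_of_le_W hXW, hTY]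
  exact (eq_of_le_of_finrank_le hXT (Nat.eq_of_mul_eq_mul_left finrank_pos hrank).le).symm

variable [IsGalois K L]

theorem fixingSubgroup_injective :
    Function.Injective (fixingSubgroup : IntermediateField K L → Subgroup Gal(L/K)) :=
  fun X Y h => by
    rw [← InfiniteGalois.fixedField_fixingSubgroup X, h, InfiniteGalois.fixedField_fixingSubgroup]

theorem mem_normalizer_fixingSubgroup_iff {M : IntermediateField K L} {σ : Gal(L/K)} :
    σ ∈ Subgroup.normalizer (M.fixingSubgroup : Set Gal(L/K)) ↔ M.map σ = M := by
  rw [Subgroup.mem_normalizer_iff_map_conj_eq, ← fixingSubgroup_injective.eq_iff,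
    IsGalois.map_fixingSubgroup]
  rfl

/-- The join of two fixing subgroups is open, hence closed, so it is the fixing subgroup of its
fixed field. -/
theorem fixingSubgroup_inf (A B : IntermediateField K L) [FiniteDimensional K A] :
    (A ⊓ B).fixingSubgroup = A.fixingSubgroup ⊔ B.fixingSubgroup := by
  set H := A.fixingSubgroup ⊔ B.fixingSubgroup
  have hH : IsClosed (H : Set Gal(L/K)) :=
    Subgroup.isClosed_of_isOpen _ (Subgroup.isOpen_mono le_sup_left A.fixingSubgroup_isOpen)
  have hfixed : fixedField H = A ⊓ B := by
    refine le_antisymm (le_inf ?_ ?_) ((le_iff_le _ _).mpr ?_)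
    · exact (fixedField_le le_sup_left).trans (InfiniteGalois.fixedField_fixingSubgroup A).le
    · exact (fixedField_le le_sup_right).trans (InfiniteGalois.fixedField_fixingSubgroup B).le
    · exact sup_le (fixingSubgroup_antitone inf_le_left) (fixingSubgroup_antitone inf_le_right)
  rw [← hfixed]
  exact InfiniteGalois.fixingSubgroup_fixedField ⟨H, hH⟩

end IntermediateField

section

variable {K Kbar : Type*} [Field K] [Field Kbar] [Algebra K Kbar]

theorem le_galClosure (X : IntermediateField K Kbar) : X ≤ galClosure K Kbar X :=
  le_normalClosure X

theorem galClosure_mono [Normal K Kbar] {X Y : IntermediateField K Kbar} (h : X ≤ Y) :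
    galClosure K Kbar X ≤ galClosure K Kbar Y :=
  normalClosure_mono X Y h

instance [Normal K Kbar] (X : IntermediateField K Kbar) : Normal K (galClosure K Kbar X) :=
  normalClosure.normal K X Kbar

instance [IsGalois K Kbar] (X : IntermediateField K Kbar) : IsGalois K (galClosure K Kbar X) :=
  IsGalois.normalClosure K X Kbar

instance [Normal K Kbar] (X : IntermediateField K Kbar) [FiniteDimensional K X] :
    FiniteDimensional K (galClosure K Kbar X) :=
  normalClosure.is_finiteDimensional K X Kbar

theorem galClosure_sup_le [Normal K Kbar] (X Y : IntermediateField K Kbar) :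
    galClosure K Kbar (X ⊔ Y) ≤ galClosure K Kbar X ⊔ galClosure K Kbar Y :=
  normalClosure_le_iff_of_normal.mpr (sup_le_sup (le_galClosure X) (le_galClosure Y))

theorem galClosure_sup_inf_eq_bot [IsGalois K Kbar] {L₁ L J F : IntermediateField K Kbar}
    [FiniteDimensional K L] [FiniteDimensional K J] (hL₁ : L₁ ≤ L) (hF : F ≤ L)
    (h₁ : galClosure K Kbar L₁ ⊓ F = ⊥) (h : galClosure K Kbar L ⊓ galClosure K Kbar J = ⊥) :
    galClosure K Kbar (L₁ ⊔ J) ⊓ F = ⊥ := by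
  refine le_bot_iff.mp ?_
  calc galClosure K Kbar (L₁ ⊔ J) ⊓ F
      ≤ ((galClosure K Kbar L₁ ⊔ galClosure K Kbar J) ⊓ galClosure K Kbar L) ⊓ F :=
        le_inf (le_inf (inf_le_left.trans (galClosure_sup_le L₁ J))
          (inf_le_right.trans (hF.trans (le_galClosure L)))) inf_le_right
    _ = ⊥ := by rw [sup_inf_eq_of_isGalois (galClosure_mono hL₁) h, h₁]

variable [PerfectField K] [IsAlgClosure K Kbar]

theorem isGaloisPair_iff {E F : IntermediateField K Kbar} (hEF : E ≤ F) :
    IsGaloisPair K Kbar E F ↔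
      E.fixingSubgroup ≤ Subgroup.normalizer (F.fixingSubgroup : Set Gal(Kbar/K)) := by
  have : Normal E Kbar := Normal.tower_top_of_normal K E Kbar
  have : PerfectField E := Algebra.IsAlgebraic.perfectField (K := K)
  have hmap (σ : E.fixingSubgroup) :
      (extendScalars hEF).map (fixingSubgroupEquiv E σ : Kbar →ₐ[E] Kbar) = extendScalars hEF ↔
        F.map (σ : Gal(Kbar/K)) = F := by
    simp only [← SetLike.coe_set_eq, coe_map, coe_extendScalars]
    rfl
  calc IsGaloisPair K Kbar E F ↔ Normal E (extendScalars hEF) :=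
        ⟨fun ⟨_, h⟩ => h.to_normal, fun h => ⟨hEF, ⟨⟩⟩⟩
    _ ↔ ∀ τ : Gal(Kbar/E), (extendScalars hEF).map τ = extendScalars hEF :=
        normal_iff_forall_map_eq'
    _ ↔ ∀ σ : E.fixingSubgroup, F.map (σ : Gal(Kbar/K)) = F :=
        ((fixingSubgroupEquiv E).toEquiv.forall_congr fun σ => (hmap σ).symm).symm
    _ ↔ _ := by
        simp only [SetLike.le_def, mem_normalizer_fixingSubgroup_iff, Subtype.forall]

theorem isGaloisPair_refl (E : IntermediateField K Kbar) : IsGaloisPair K Kbar E E :=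
  (isGaloisPair_iff le_rfl).mpr Subgroup.le_normalizer

theorem IsGaloisPair.inf {A B M : IntermediateField K Kbar} [FiniteDimensional K A]
    (hA : IsGaloisPair K Kbar A M) (hB : IsGaloisPair K Kbar B M) :
    IsGaloisPair K Kbar (A ⊓ B) M := by
  rw [isGaloisPair_iff (inf_le_left.trans hA.1), fixingSubgroup_inf]
  exact sup_le ((isGaloisPair_iff hA.1).mp hA) ((isGaloisPair_iff hB.1).mp hB)

theorem IsGaloisPair.sup_right {E X : IntermediateField K Kbar} (h : IsGaloisPair K Kbar E X)
    (F : IntermediateField K Kbar) [IsGalois K F] : IsGaloisPair K Kbar E (X ⊔ F) := by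
  have : F.fixingSubgroup.Normal := (InfiniteGalois.normal_iff_isGalois F).mpr ‹_›
  rw [isGaloisPair_iff (h.1.trans le_sup_left), fixingSubgroup_sup]
  refine le_trans ?_ Subgroup.inf_normalizer_le_normalizer_inf
  rw [Subgroup.normalizer_eq_top (H := F.fixingSubgroup), inf_top_eq]
  exact (isGaloisPair_iff h.1).mp h

section Chains

variable {M : IntermediateField K Kbar} [FiniteDimensional K M]

theorem DescStep.le_of_isGaloisPair {N N' : IntermediateField K Kbar}
    (h : DescStep K Kbar M N') (hN : IsGaloisPair K Kbar N M) : N' ≤ N := by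
  obtain ⟨hN'M, hpair, hmin⟩ := h
  have : FiniteDimensional K N' := finiteDimensional_of_le hN'M
  exact inf_eq_left.mp <| eq_of_le_of_finrank_le inf_le_left <|
    hmin _ (inf_le_left.trans hN'M) (hpair.inf hN)

theorem InDescChain.eq_or_le_of_isGaloisPair {N E : IntermediateField K Kbar}
    (hN : IsGaloisPair K Kbar N M) (h : InDescChain K Kbar M E) : E = M ∨ E ≤ N := by
  induction h with
  | refl => exact .inl rfl
  | tail _ hstep ih =>
    rcases ih with rfl | hle
    · exact .inr (hstep.le_of_isGaloisPair hN)
    · exact .inr (hstep.1.trans hle)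

theorem AscStep.le_of_isGalois {F F' : IntermediateField K Kbar} [IsGalois K F]
    (h : AscStep K Kbar M ⊥ F') (hFM : F ≤ M) : F ≤ F' := by
  obtain ⟨-, hF'M, hpair, hmax⟩ := h
  have : FiniteDimensional K ↥(F' ⊔ F) := finiteDimensional_of_le (sup_le hF'M hFM)
  exact sup_eq_left.mp <| (eq_of_le_of_finrank_le le_sup_left <|
    hmax _ bot_le (sup_le hF'M hFM) (hpair.sup_right F)).symm

theorem InAscChain.eq_bot_or_le_of_isGalois {F E : IntermediateField K Kbar} [IsGalois K F]
    (hFM : F ≤ M) (h : InAscChain K Kbar M E) : E = ⊥ ∨ F ≤ E := by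
  induction h with
  | refl => exact .inl rfl
  | tail _ hstep ih =>
    rcases ih with rfl | hle
    · exact .inr (hstep.le_of_isGalois hFM)
    · exact .inr (hle.trans hstep.1)

end Chains

end

theorem strong_general_magnification_chain_coincidence_general
    (K Kbar : Type*) [Field K] [PerfectField K] [Field Kbar] [Algebra K Kbar]
    [IsAlgClosure K Kbar]
    (M L J : IntermediateField K Kbar) [FiniteDimensional K ↥M]
    (hSGM : IsSGMvia K Kbar M L J)
    (E : IntermediateField K Kbar) (hEM : E ≠ M) (hEK : E ≠ ⊥)
    (hdesc : InDescChain K Kbar M E) (hasc : InAscChain K Kbar M E) :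
    IsPrimitive K Kbar L ∨
    (J ≠ ⊥ ∧ IsPrimitive K Kbar J) ∨
    (J ≠ ⊥ ∧ clusterSize K Kbar J = 1 ∧ ascIndex K Kbar L = 1 ∧
      InAscChain K Kbar J J ∧ InDescChain K Kbar L ⊥) ∨
    (J ≠ ⊥ ∧ clusterSize K Kbar L = 1 ∧ ascIndex K Kbar J = 1 ∧
      InAscChain K Kbar L L ∧ InDescChain K Kbar J ⊥) := by
  refine .inl ?_
  rintro ⟨L₁, F, ⟨hL₁L, -, -, hFgal, hdisj, hsup⟩, hF⟩
  apply hF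
  obtain ⟨hLM, -, hJfin, hLJ, hM⟩ := hSGM
  have hFL : F ≤ L := hsup ▸ le_sup_right
  have : FiniteDimensional K L := finiteDimensional_of_le hLM
  have hpair : IsGaloisPair K Kbar (L₁ ⊔ J) M := by
    rw [← hM, ← hsup, sup_right_comm]
    exact (isGaloisPair_refl _).sup_right F
  have hEL₁J : E ≤ L₁ ⊔ J := (hdesc.eq_or_le_of_isGaloisPair hpair).resolve_left hEM
  have hFE : F ≤ E := (hasc.eq_bot_or_le_of_isGalois (hFL.trans hLM)).resolve_left hEK
  rw [← le_bot_iff, ← galClosure_sup_inf_eq_bot hL₁L hFL hdisj hLJ]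
  exact le_inf ((hFE.trans hEL₁J).trans (le_galClosure _)) le_rfl

/-- Let `M/K` be a nontrivial finite extension obtained by strong general
magnification from `L/K` through `J/K`, and suppose one of the fields in the unique descending
chain of `M/K` different from both `M` and `K` coincides with one of the fields in the unique
ascending chain of `M/K`.  Then at least one of the four listed alternatives holds. -/
theorem strong_general_magnification_chain_coincidence
    (K Kbar : Type*) [Field K] [PerfectField K] [Field Kbar] [Algebra K Kbar]
    [IsAlgClosure K Kbar]
    (M L J : IntermediateField K Kbar) [FiniteDimensional K ↥M] (hM : M ≠ ⊥)
    (hSGM : IsSGMvia K Kbar M L J)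
    (E : IntermediateField K Kbar) (hEM : E ≠ M) (hEK : E ≠ ⊥)
    (hdesc : InDescChain K Kbar M E) (hasc : InAscChain K Kbar M E) :
    IsPrimitive K Kbar L ∨
    (J ≠ ⊥ ∧ IsPrimitive K Kbar J) ∨
    (J ≠ ⊥ ∧ clusterSize K Kbar J = 1 ∧ ascIndex K Kbar L = 1 ∧
      InAscChain K Kbar J J ∧ InDescChain K Kbar L ⊥) ∨
    (J ≠ ⊥ ∧ clusterSize K Kbar L = 1 ∧ ascIndex K Kbar J = 1 ∧
      InAscChain K Kbar L L ∧ InDescChain K Kbar J ⊥) :=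
  strong_general_magnification_chain_coincidence_general K Kbar M L J hSGM E hEM hEK hdesc hasc
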